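/- The scalar mean squared error of the Liu-type estimator satisfies trace(Cov_LTE) + b_LTEᵀ b_LTE = Σ_{j=1}^p (λ_j − d)²/(λ_j (λ_j + k)²) + (d + k)² Σ_{j=1}^p α_j²/(λ_j + k)², where α = Qᵀβ. -/

import Mathlib

open Matrix

/-!
Conjugation `A ↦ Q A Qᵀ` by an orthogonal `Q` commutes with shifts by scalars, products and
(junk-valued) inverses, so `Cov_LTE` and `b_LTE` at `V = Q Λ Qᵀ` are the conjugates of their
values at `Λ`, the bias evaluated at `α = Qᵀ β`. Trace and Euclidean norm are invariant under
this conjugation, and at the diagonal `Λ` both quantities are computed entry by entry.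
-/

/-- Covariance matrix of the Liu-type estimator (LTE). -/
noncomputable def covLTE {p : ℕ} (V : Matrix (Fin p) (Fin p) ℝ) (k d : ℝ) :
    Matrix (Fin p) (Fin p) ℝ :=
  (V + k • 1)⁻¹ * (V - d • 1) * V⁻¹ * (V - d • 1) * (V + k • 1)⁻¹

/-- Covariance matrix of the almost unbiased Liu-type estimator (AULTE). -/
noncomputable def covAULTE {p : ℕ} (V : Matrix (Fin p) (Fin p) ℝ) (k d : ℝ) :
    Matrix (Fin p) (Fin p) ℝ :=
  (1 - (k + d) ^ 2 • ((V + k • 1)⁻¹) ^ 2) * V⁻¹ * (1 - (k + d) ^ 2 • ((V + k • 1)⁻¹) ^ 2)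

/-- The matrix `M` entering the modified almost unbiased Liu-type estimator (MAULTE). -/
noncomputable def mMAULTE {p : ℕ} (V : Matrix (Fin p) (Fin p) ℝ) (k d : ℝ) :
    Matrix (Fin p) (Fin p) ℝ :=
  (1 - (k + d) ^ 2 • ((V + k • 1)⁻¹) ^ 2) * (1 - (k + d) • (V + k • 1)⁻¹)

/-- Covariance matrix of the MAULTE. -/
noncomputable def covMAULTE {p : ℕ} (V : Matrix (Fin p) (Fin p) ℝ) (k d : ℝ) :
    Matrix (Fin p) (Fin p) ℝ :=
  mMAULTE V k d * V⁻¹ * (mMAULTE V k d)ᵀ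

/-- Bias vector of the LTE. -/
noncomputable def biasLTE {p : ℕ} (V : Matrix (Fin p) (Fin p) ℝ) (k d : ℝ) (β : Fin p → ℝ) :
    Fin p → ℝ :=
  (-(d + k)) • ((V + k • 1)⁻¹ *ᵥ β)

/-- Bias vector of the AULTE. -/
noncomputable def biasAULTE {p : ℕ} (V : Matrix (Fin p) (Fin p) ℝ) (k d : ℝ) (β : Fin p → ℝ) :
    Fin p → ℝ :=
  (-(d + k) ^ 2) • (((V + k • 1)⁻¹) ^ 2 *ᵥ β)

/-- Bias vector of the MAULTE. -/
noncomputable def biasMAULTE {p : ℕ} (V : Matrix (Fin p) (Fin p) ℝ) (k d : ℝ) (β : Fin p → ℝ) :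
    Fin p → ℝ :=
  (-(d + k)) •
    (((1 + (d + k) • (V + k • 1)⁻¹ - (d + k) ^ 2 • ((V + k • 1)⁻¹) ^ 2) * (V + k • 1)⁻¹) *ᵥ β)

/-- Matrix mean squared error built from a covariance matrix and a bias vector. -/
noncomputable def mmse {p : ℕ} (C : Matrix (Fin p) (Fin p) ℝ) (b : Fin p → ℝ) :
    Matrix (Fin p) (Fin p) ℝ :=
  C + vecMulVec b b

namespace Matrix

variable {n R : Type*} [DecidableEq n] [CommRing R]

theorem diagonal_add_smul_one (v : n → R) (c : R) :
    diagonal v + c • 1 = diagonal fun i => v i + c := by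
  rw [smul_one_eq_diagonal, diagonal_add]

theorem diagonal_sub_smul_one (v : n → R) (c : R) :
    diagonal v - c • 1 = diagonal fun i => v i - c := by
  rw [smul_one_eq_diagonal, diagonal_sub]

variable [Fintype n]

theorem conj_mul_conj {Q : Matrix n n R} (hQ : Qᵀ * Q = 1) (A B : Matrix n n R) :
    Q * A * Qᵀ * (Q * B * Qᵀ) = Q * (A * B) * Qᵀ := by
  simp only [Matrix.mul_assoc]
  rw [← Matrix.mul_assoc Qᵀ Q, hQ, Matrix.one_mul]

theorem conj_smul_one {Q : Matrix n n R} (hQ : Q * Qᵀ = 1) (c : R) :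
    Q * (c • 1) * Qᵀ = c • 1 := by
  rw [Matrix.mul_smul, Matrix.mul_one, Matrix.smul_mul, hQ]

theorem conj_add_smul_one {Q : Matrix n n R} (hQ : Q * Qᵀ = 1) (A : Matrix n n R) (c : R) :
    Q * A * Qᵀ + c • 1 = Q * (A + c • 1) * Qᵀ := by
  rw [Matrix.mul_add, Matrix.add_mul, conj_smul_one hQ]

theorem conj_sub_smul_one {Q : Matrix n n R} (hQ : Q * Qᵀ = 1) (A : Matrix n n R) (c : R) :
    Q * A * Qᵀ - c • 1 = Q * (A - c • 1) * Qᵀ := by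
  rw [Matrix.mul_sub, Matrix.sub_mul, conj_smul_one hQ]

theorem conj_inv {Q : Matrix n n R} (hQ : Q * Qᵀ = 1) (A : Matrix n n R) :
    (Q * A * Qᵀ)⁻¹ = Q * A⁻¹ * Qᵀ := by
  rw [Matrix.mul_inv_rev, Matrix.mul_inv_rev, inv_eq_left_inv hQ,
    inv_eq_left_inv (mul_eq_one_comm.mp hQ), Matrix.mul_assoc]

theorem trace_mul_mul_transpose {Q : Matrix n n R} (hQ : Qᵀ * Q = 1) (A : Matrix n n R) :
    (Q * A * Qᵀ).trace = A.trace := by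
  rw [trace_mul_cycle, hQ, Matrix.one_mul]

theorem dotProduct_mulVec_mulVec {Q : Matrix n n R} (hQ : Qᵀ * Q = 1) (x y : n → R) :
    Q *ᵥ x ⬝ᵥ Q *ᵥ y = x ⬝ᵥ y := by
  rw [dotProduct_mulVec, ← vecMul_transpose, vecMul_vecMul, hQ, vecMul_one]

theorem inv_diagonal_of_ne_zero {K : Type*} [Field K] {v : n → K} (hv : ∀ i, v i ≠ 0) :
    (diagonal v)⁻¹ = diagonal fun i => (v i)⁻¹ := by
  refine inv_eq_right_inv ?_
  rw [diagonal_mul_diagonal, ← diagonal_one]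
  exact congrArg diagonal (funext fun i => mul_inv_cancel₀ (hv i))

end Matrix

variable {p : ℕ}

theorem covLTE_conj {Q : Matrix (Fin p) (Fin p) ℝ} (hQ : Q * Qᵀ = 1)
    (A : Matrix (Fin p) (Fin p) ℝ) (k d : ℝ) :
    covLTE (Q * A * Qᵀ) k d = Q * covLTE A k d * Qᵀ := by
  simp only [covLTE, conj_add_smul_one hQ, conj_sub_smul_one hQ, conj_inv hQ,
    conj_mul_conj (mul_eq_one_comm.mp hQ)]

theorem biasLTE_conj {Q : Matrix (Fin p) (Fin p) ℝ} (hQ : Q * Qᵀ = 1)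
    (A : Matrix (Fin p) (Fin p) ℝ) (k d : ℝ) (β : Fin p → ℝ) :
    biasLTE (Q * A * Qᵀ) k d β = Q *ᵥ biasLTE A k d (Qᵀ *ᵥ β) := by
  rw [biasLTE, biasLTE, conj_add_smul_one hQ, conj_inv hQ, mulVec_smul, mulVec_mulVec,
    mulVec_mulVec]

theorem covLTE_diagonal {lam : Fin p → ℝ} {k : ℝ} (hlam : ∀ j, lam j ≠ 0)
    (hlamk : ∀ j, lam j + k ≠ 0) (d : ℝ) :
    covLTE (diagonal lam) k d =
      diagonal fun j => (lam j - d) ^ 2 / (lam j * (lam j + k) ^ 2) := by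
  rw [covLTE, diagonal_add_smul_one, diagonal_sub_smul_one, inv_diagonal_of_ne_zero hlam,
    inv_diagonal_of_ne_zero hlamk]
  simp only [diagonal_mul_diagonal]
  congr 1
  funext j
  field_simp

theorem dotProduct_biasLTE_diagonal {lam : Fin p → ℝ} {k : ℝ} (hlamk : ∀ j, lam j + k ≠ 0)
    (d : ℝ) (α : Fin p → ℝ) :
    biasLTE (diagonal lam) k d α ⬝ᵥ biasLTE (diagonal lam) k d α =
      (d + k) ^ 2 * ∑ j, α j ^ 2 / (lam j + k) ^ 2 := by
  rw [biasLTE, diagonal_add_smul_one, inv_diagonal_of_ne_zero hlamk, smul_dotProduct,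
    dotProduct_smul, dotProduct, smul_eq_mul, smul_eq_mul, Finset.mul_sum, Finset.mul_sum,
    Finset.mul_sum]
  refine Finset.sum_congr rfl fun j _ => ?_
  rw [mulVec_diagonal]
  field_simp

/-- Scalar MSE of the LTE. -/
theorem mse_LTE_eq (p : ℕ) (Q : Matrix (Fin p) (Fin p) ℝ) (hQ : Q * Qᵀ = 1)
    (lam : Fin p → ℝ) (hlam : ∀ j, 0 < lam j) (k d : ℝ) (hk : 0 < k) (β : Fin p → ℝ) :
    (covLTE (Q * Matrix.diagonal lam * Qᵀ) k d).trace +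
        biasLTE (Q * Matrix.diagonal lam * Qᵀ) k d β ⬝ᵥ
          biasLTE (Q * Matrix.diagonal lam * Qᵀ) k d β =
      (∑ j, (lam j - d) ^ 2 / (lam j * (lam j + k) ^ 2)) +
        (d + k) ^ 2 * ∑ j, (Qᵀ *ᵥ β) j ^ 2 / (lam j + k) ^ 2 := by
  have hQ' : Qᵀ * Q = 1 := mul_eq_one_comm.mp hQ
  have hlamk : ∀ j, lam j + k ≠ 0 := fun j => (add_pos (hlam j) hk).ne'
  rw [covLTE_conj hQ, trace_mul_mul_transpose hQ',
    covLTE_diagonal (fun j => (hlam j).ne') hlamk, trace_diagonal, biasLTE_conj hQ, dotProduct_mulVec_mulVec hQ',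
    dotProduct_biasLTE_diagonal hlamk]
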